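/- arXiv:1807.04499 — 3 statements merged into one kernel-verified Lean document; each statement's English description precedes it below -/
import Mathlib

section
/- Let S be a holomorphic semigroup with no wandering domains and let U be a component of the Fatou set F(S). Then the forward orbit {U_f : f ∈ S} of U contains a component W whose stabilizer S_W has cofinite index in S. -/
open Filter Topology

/-- A family `S` of maps is normal on `V` if every sequence from `S` has a subsequence
converging locally uniformly on `V` or diverging uniformly to `∞` on compact subsets of `V`. -/
def NormalOn (S : Set (ℂ → ℂ)) (V : Set ℂ) : Prop :=
  ∀ seq : ℕ → ℂ → ℂ, (∀ n, seq n ∈ S) →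
    ∃ φ : ℕ → ℕ, StrictMono φ ∧
      ((∃ g : ℂ → ℂ, TendstoLocallyUniformlyOn (fun n => seq (φ n)) g atTop V) ∨
       (∀ K : Set ℂ, K ⊆ V → IsCompact K → ∀ M : ℝ,
          ∀ᶠ n in atTop, ∀ z ∈ K, M ≤ ‖seq (φ n) z‖))

/-- Fatou set of a semigroup of holomorphic maps: points of local normality. -/
def FatouSet (S : Set (ℂ → ℂ)) : Set ℂ :=
  {z | ∃ V ∈ 𝓝 z, NormalOn S V}

/-- Julia set: complement of the Fatou set. -/
def JuliaSet (S : Set (ℂ → ℂ)) : Set ℂ := (FatouSet S)ᶜ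

/-- Escaping set of a semigroup: points where every element is iteratively divergent. -/
def EscapingSet (S : Set (ℂ → ℂ)) : Set ℂ :=
  {z | ∀ f ∈ S, Tendsto (fun n => ‖f^[n] z‖) atTop atTop}

/-- Escaping set of a single function. -/
def EscapingSetOf (f : ℂ → ℂ) : Set ℂ :=
  {z | Tendsto (fun n => ‖f^[n] z‖) atTop atTop}

/-- A holomorphic semigroup: a nonempty set of entire maps closed under composition. -/
def HolomorphicSemigroup (S : Set (ℂ → ℂ)) : Prop :=
  S.Nonempty ∧ (∀ f ∈ S, Differentiable ℂ f) ∧ ∀ f ∈ S, ∀ g ∈ S, f ∘ g ∈ S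

/-- A transcendental entire function: entire and not a polynomial. -/
def TranscendentalEntire (f : ℂ → ℂ) : Prop :=
  Differentiable ℂ f ∧ ¬ ∃ p : Polynomial ℂ, ∀ z, f z = p.eval z

/-- A transcendental (entire) semigroup. -/
def TranscendentalSemigroup (S : Set (ℂ → ℂ)) : Prop :=
  S.Nonempty ∧ (∀ f ∈ S, TranscendentalEntire f) ∧ ∀ f ∈ S, ∀ g ∈ S, f ∘ g ∈ S

/-- `T` is a subsemigroup of `S`. -/
def IsSubsemigroupOf (T S : Set (ℂ → ℂ)) : Prop :=
  T.Nonempty ∧ T ⊆ S ∧ ∀ f ∈ T, ∀ g ∈ T, f ∘ g ∈ T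

/-- `T` has finite index in `S`: `S` is a finite union of translates `fᵢ ∘ T` with
`fᵢ ∈ S ∪ {id}`. -/
def FiniteIndexIn (T S : Set (ℂ → ℂ)) : Prop :=
  ∃ (n : ℕ) (fs : Fin n → ℂ → ℂ), (∀ i, fs i ∈ S ∨ fs i = id) ∧
    S = ⋃ i, (fun h => fs i ∘ h) '' T

/-- `T` has cofinite index in `S`. -/
def CofiniteIndexIn (T S : Set (ℂ → ℂ)) : Prop :=
  ∃ (n : ℕ) (fs : Fin n → ℂ → ℂ), (∀ i, fs i ∈ S ∨ fs i = id) ∧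
    ∀ f ∈ S, ∃ i, fs i ∘ f ∈ T

/-- Membership in the semigroup generated by a set `A` of maps: all finite compositions. -/
inductive SemigroupGen (A : Set (ℂ → ℂ)) : (ℂ → ℂ) → Prop
  | base : ∀ f ∈ A, SemigroupGen A f
  | comp : ∀ f g, SemigroupGen A f → SemigroupGen A g → SemigroupGen A (f ∘ g)

/-- A finitely generated semigroup of maps. -/
def FinitelyGeneratedSemigroup (S : Set (ℂ → ℂ)) : Prop :=
  ∃ A : Set (ℂ → ℂ), A.Finite ∧ S = {f | SemigroupGen A f}

/-- `U` is a component of the Fatou set of `S`. -/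
def IsFatouComponent (S : Set (ℂ → ℂ)) (U : Set ℂ) : Prop :=
  ∃ z ∈ FatouSet S, U = connectedComponentIn (FatouSet S) z

/-- `S` is discontinuous at `z`: some neighborhood `V` of `z` satisfies `f(V) ∩ V = ∅`
for all `f ∈ S`. -/
def DiscontinuousAt (S : Set (ℂ → ℂ)) (z : ℂ) : Prop :=
  ∃ V ∈ 𝓝 z, ∀ f ∈ S, f '' V ∩ V = ∅

/-- The regular set of `S`. -/
def RegularSet (S : Set (ℂ → ℂ)) : Set ℂ := {z | DiscontinuousAt S z}

/-- The limit set of `S`. -/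
def LimitSet (S : Set (ℂ → ℂ)) : Set ℂ :=
  {z | ∃ (z₀ : ℂ) (fs : ℕ → ℂ → ℂ), (∀ n, fs n ∈ S) ∧ Function.Injective fs ∧
    Tendsto (fun n => fs n z₀) atTop (𝓝 z)}

/-- A partial fundamental set for `S`. -/
def PartialFundamentalSet (S : Set (ℂ → ℂ)) (U : Set ℂ) : Prop :=
  U.Nonempty ∧ U ⊆ RegularSet S ∧ ∀ f ∈ S, f '' U ∩ U = ∅

/-- A fundamental set for `S`. -/
def FundamentalSet (S : Set (ℂ → ℂ)) (U : Set ℂ) : Prop :=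
  PartialFundamentalSet S U ∧ (⋃ f ∈ S, f '' U) = RegularSet S

theorem stmt_8 (S : Set (ℂ → ℂ)) (hS : HolomorphicSemigroup S)
    (orb : Set ℂ → (ℂ → ℂ) → Set ℂ)
    (horb : ∀ V, IsFatouComponent S V → ∀ f ∈ S,
      IsFatouComponent S (orb V f) ∧ f '' V ⊆ orb V f)
    (hnowandering : ∀ V, IsFatouComponent S V → {W | ∃ f ∈ S, W = orb V f}.Finite)
    (U : Set ℂ) (hU : IsFatouComponent S U) :
    ∃ W, (∃ f ∈ S, W = orb U f) ∧ CofiniteIndexIn {f | f ∈ S ∧ orb W f = W} S := by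
  classical
  obtain ⟨hSne, hdiff, hcomp⟩ := hS
  have hne : ∀ V, IsFatouComponent S V → V.Nonempty := by
    rintro V ⟨z, hz, rfl⟩
    exact ⟨z, mem_connectedComponentIn hz⟩
  have huniq : ∀ A B, IsFatouComponent S A → IsFatouComponent S B →
      ∀ z, z ∈ A → z ∈ B → A = B := by
    rintro A B ⟨a, ha, rfl⟩ ⟨b, hb, rfl⟩ z hzA hzB
    have h1 : connectedComponentIn (FatouSet S) a = connectedComponentIn (FatouSet S) z :=
      connectedComponentIn_eq hzA
    have h2 : connectedComponentIn (FatouSet S) b = connectedComponentIn (FatouSet S) z :=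
      connectedComponentIn_eq hzB
    exact h1.trans h2.symm
  have horbcomp : ∀ V, IsFatouComponent S V → ∀ f ∈ S, ∀ g ∈ S,
      orb V (f ∘ g) = orb (orb V g) f := by
    intro V hV f hf g hg
    obtain ⟨z, hz⟩ := hne V hV
    have h1 := horb V hV (f ∘ g) (hcomp f hf g hg)
    have h2 := horb V hV g hg
    have h3 := horb (orb V g) h2.1 f hf
    refine huniq _ _ h1.1 h3.1 (f (g z)) ?_ ?_
    · exact h1.2 ⟨z, hz, rfl⟩
    · exact h3.2 ⟨g z, h2.2 ⟨z, hz, rfl⟩, rfl⟩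
  set O : Set (Set ℂ) := {W | ∃ f ∈ S, W = orb U f} with hOdef
  have hOfin : O.Finite := hnowandering U hU
  have hOcomp : ∀ V ∈ O, IsFatouComponent S V := by
    rintro V ⟨f, hf, rfl⟩; exact (horb U hU f hf).1
  set R : Set ℂ → Set (Set ℂ) := fun V => {V' | ∃ f ∈ S, orb V f = V'} with hRdef
  have hRtrans : ∀ V₀ ∈ O, ∀ V ∈ R V₀, R V ⊆ R V₀ := by
    rintro V₀ hV₀ V ⟨g, hg, rfl⟩ V' ⟨f, hf, rfl⟩
    exact ⟨f ∘ g, hcomp f hf g hg, horbcomp V₀ (hOcomp V₀ hV₀) f hf g hg⟩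
  have hRsub : ∀ V ∈ O, R V ⊆ O := by
    rintro V ⟨g, hg, rfl⟩ V' ⟨f, hf, rfl⟩
    exact ⟨f ∘ g, hcomp f hf g hg, (horbcomp U hU f hf g hg).symm⟩
  have hRfin : ∀ V ∈ O, (R V).Finite := fun V hV => hOfin.subset (hRsub V hV)
  have hOne : O.Nonempty := by
    obtain ⟨f, hf⟩ := hSne; exact ⟨orb U f, f, hf, rfl⟩
  obtain ⟨W₀, hW₀O, hmin⟩ := Set.exists_min_image O (fun V => (R V).ncard) hOfin hOne
  obtain ⟨f₁, hf₁⟩ := hSne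
  have hWmem : orb W₀ f₁ ∈ R W₀ := ⟨f₁, hf₁, rfl⟩
  set W := orb W₀ f₁ with hWdef
  have hWO : W ∈ O := hRsub W₀ hW₀O hWmem
  have hRWeq : R W = R W₀ :=
    Set.eq_of_subset_of_ncard_le (hRtrans W₀ hW₀O W hWmem)
      (hmin W hWO) (hRfin W₀ hW₀O)
  have hWW : W ∈ R W := by rw [hRWeq]; exact hWmem
  have hback : ∀ V ∈ R W, ∃ g ∈ S, orb V g = W := by
    intro V hV
    have hVO : V ∈ O := hRsub W hWO hV
    have hVW₀ : V ∈ R W₀ := by rw [← hRWeq]; exact hV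
    have hRVeq : R V = R W₀ :=
      Set.eq_of_subset_of_ncard_le (hRtrans W₀ hW₀O V hVW₀)
        (hmin V hVO) (hRfin W₀ hW₀O)
    have : W ∈ R V := by rw [hRVeq, ← hRWeq]; exact hWW
    exact this
  choose! g hgS hgorb using hback
  refine ⟨W, hWO, ?_⟩
  set t : Finset (Set ℂ) := (hRfin W hWO).toFinset with htdef
  refine ⟨t.card, fun i => g ((t.equivFin.symm i) : Set ℂ), ?_, ?_⟩
  · intro i
    have hmem : ((t.equivFin.symm i : t) : Set ℂ) ∈ R W :=
      (Set.Finite.mem_toFinset _).mp (t.equivFin.symm i).2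
    exact Or.inl (hgS _ hmem)
  · intro f hf
    have hV : orb W f ∈ R W := ⟨f, hf, rfl⟩
    have hVt : orb W f ∈ t := (Set.Finite.mem_toFinset _).mpr hV
    refine ⟨t.equivFin ⟨orb W f, hVt⟩, ?_⟩
    have hsymm : t.equivFin.symm (t.equivFin ⟨orb W f, hVt⟩) = ⟨orb W f, hVt⟩ :=
      Equiv.symm_apply_apply _ _
    show g (↑(t.equivFin.symm (t.equivFin ⟨orb W f, hVt⟩))) ∘ f ∈ _
    rw [hsymm]
    refine ⟨hcomp _ (hgS _ hV) f hf, ?_⟩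
    rw [horbcomp W (hOcomp W hWO) _ (hgS _ hV) f hf]
    exact hgorb _ hV
end

section
/- Let T be a large subsemigroup (i.e., of finite Rees index) of a semigroup S. Then S is finitely generated if and only if T is finitely generated. -/
open Filter Topology

private inductive ProdLen {M : Type*} [Semigroup M] (A : Set M) : ℕ → M → Prop
  | single (a : M) (ha : a ∈ A) : ProdLen A 1 a
  | cons (a : M) (ha : a ∈ A) (n : ℕ) (u : M) (hu : ProdLen A n u) : ProdLen A (n + 1) (a * u)

private lemma ProdLen.mem_closure {M : Type*} [Semigroup M] {A : Set M} {n : ℕ} {x : M}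
    (h : ProdLen A n x) : x ∈ Subsemigroup.closure A := by
  induction h with
  | single a ha => exact Subsemigroup.subset_closure ha
  | cons a ha n u hu ih => exact mul_mem (Subsemigroup.subset_closure ha) ih

private lemma ProdLen.append {M : Type*} [Semigroup M] {A : Set M} {n m : ℕ} {x y : M}
    (hx : ProdLen A n x) (hy : ProdLen A m y) : ProdLen A (n + m) (x * y) := by
  induction hx with
  | single a ha => rw [Nat.add_comm]; exact .cons a ha m y hy
  | cons a ha k u hu ih =>
    rw [mul_assoc, show k + 1 + m = k + m + 1 by omega]
    exact .cons a ha (k + m) _ ih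

private lemma exists_prodLen {M : Type*} [Semigroup M] {A : Set M} {x : M}
    (hx : x ∈ Subsemigroup.closure A) : ∃ n, ProdLen A n x := by
  induction hx using Subsemigroup.closure_induction with
  | mem a ha => exact ⟨1, .single a ha⟩
  | mul x y hx hy ihx ihy =>
    obtain ⟨n, hn⟩ := ihx; obtain ⟨m, hm⟩ := ihy; exact ⟨n + m, hn.append hm⟩

theorem stmt_11 {M : Type*} [Semigroup M] (S T : Subsemigroup M) (hTS : T ≤ S)
    (hRees : ((S : Set M) \ (T : Set M)).Finite) :
    (∃ A : Set M, A.Finite ∧ Subsemigroup.closure A = S) ↔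
      (∃ B : Set M, B.Finite ∧ Subsemigroup.closure B = T) := by
  constructor
  · rintro ⟨A, hAfin, hA⟩
    set F : Set M := (S : Set M) \ (T : Set M) with hF
    have hAS : A ⊆ (S : Set M) := fun x hx => hA ▸ Subsemigroup.subset_closure hx
    set A' : Set M := A ∪ F with hA'def
    have hA'S : A' ⊆ (S : Set M) := by rintro x (hx | hx); exacts [hAS hx, hx.1]
    have hSA' : Subsemigroup.closure A' = S :=
      le_antisymm (Subsemigroup.closure_le.2 hA'S)
        (hA ▸ Subsemigroup.closure_mono Set.subset_union_left)
    set B : Set M := (T : Set M) ∩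
      ((A' ∪ Set.image2 (· * ·) A' A') ∪ Set.image2 (· * ·) A' (Set.image2 (· * ·) A' A'))
      with hBdef
    have hA'fin : A'.Finite := hAfin.union hRees
    have hBfin : B.Finite :=
      Set.Finite.inter_of_right
        ((hA'fin.union (hA'fin.image2 _ hA'fin)).union
          (hA'fin.image2 _ (hA'fin.image2 _ hA'fin))) _
    refine ⟨B, hBfin, le_antisymm (Subsemigroup.closure_le.2 Set.inter_subset_left) ?_⟩
    have key : ∀ n : ℕ, ∀ t : M, ProdLen A' n t → t ∈ (T : Set M) →
        t ∈ Subsemigroup.closure B := by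
      intro n
      induction n using Nat.strong_induction_on with
      | _ n ih =>
        intro t hp ht
        cases hp with
        | single a ha => exact Subsemigroup.subset_closure ⟨ht, Or.inl (Or.inl ha)⟩
        | cons a ha n u hu =>
          cases hu with
          | single b hb =>
            refine Subsemigroup.subset_closure ⟨ht, Or.inl (Or.inr ⟨a, ha, _, ?_, rfl⟩)⟩
            assumption
          | cons b hb m v hv =>
            -- t = a * (b * v), total length m + 2
            have hvS : v ∈ (S : Set M) := hSA' ▸ hv.mem_closure
            by_cases hvT : v ∈ (T : Set M)
            · have hp2S : a * b ∈ (S : Set M) := S.mul_mem (hA'S ha) (hA'S hb)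
              by_cases hp2T : a * b ∈ (T : Set M)
              · have h1 : a * b ∈ Subsemigroup.closure B :=
                  Subsemigroup.subset_closure ⟨hp2T, Or.inl (Or.inr ⟨a, ha, b, hb, rfl⟩)⟩
                have h2 : v ∈ Subsemigroup.closure B := ih m (by omega) v hv hvT
                have hassoc : a * (b * v) = (a * b) * v := (mul_assoc a b v).symm
                rw [hassoc]
                exact mul_mem h1 h2
              · have hf : a * b ∈ A' := Or.inr ⟨hp2S, hp2T⟩
                have hp' : ProdLen A' (m + 1) (a * (b * v)) := by
                  rw [← mul_assoc]
                  exact .cons _ hf m v hv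
                exact ih (m + 1) (by omega) _ hp' ht
            · have hf : v ∈ A' := Or.inr ⟨hvS, hvT⟩
              exact Subsemigroup.subset_closure
                ⟨ht, Or.inr ⟨a, ha, b * v, ⟨b, hb, v, hf, rfl⟩, rfl⟩⟩
    intro t ht
    obtain ⟨n, hn⟩ := exists_prodLen (hSA'.symm ▸ hTS ht : t ∈ Subsemigroup.closure A')
    exact key n t hn ht
  · rintro ⟨B, hBfin, hB⟩
    refine ⟨B ∪ ((S : Set M) \ (T : Set M)), hBfin.union hRees, le_antisymm ?_ ?_⟩
    · refine Subsemigroup.closure_le.2 ?_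
      rintro x (hx | hx)
      · exact hTS (hB ▸ Subsemigroup.subset_closure hx)
      · exact hx.1
    · intro s hs
      by_cases hsT : s ∈ (T : Set M)
      · exact Subsemigroup.closure_mono Set.subset_union_left (hB.symm ▸ hsT)
      · exact Subsemigroup.subset_closure (Or.inr ⟨hs, hsT⟩)
end

section
/- Let T be a large subsemigroup of a finitely generated holomorphic semigroup S (i.e., S \ T is finite). Then F(S) = F(T) and J(S) = J(T). -/
open Filter Topology

lemma tendstoLocallyUniformlyOn_const {α β ι : Type*} [TopologicalSpace α] [UniformSpace β]
    (l : Filter ι) (g : α → β) (s : Set α) :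
    TendstoLocallyUniformlyOn (fun _ : ι => g) g l s :=
  TendstoUniformlyOn.tendstoLocallyUniformlyOn fun _ hu =>
    Eventually.of_forall fun _ _ _ => refl_mem_uniformity hu

lemma NormalOn.mono {S T : Set (ℂ → ℂ)} {V : Set ℂ} (hTS : T ⊆ S) (h : NormalOn S V) :
    NormalOn T V :=
  fun seq hseq => h seq fun n => hTS (hseq n)

/-- A sequence from `S` either meets `T` infinitely often, or repeats one of the finitely many
maps of `S \ T` infinitely often; a constant subsequence converges. -/
lemma NormalOn.of_diff_finite {S T : Set (ℂ → ℂ)} {V : Set ℂ} (h : NormalOn T V)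
    (hST : (S \ T).Finite) : NormalOn S V := by
  intro seq hseq
  have hsplit : ∃ᶠ n in atTop, seq n ∈ T ∨ ∃ g ∈ S \ T, seq n = g :=
    Frequently.of_forall fun n => (em (seq n ∈ T)).imp_right fun hn => ⟨seq n, ⟨hseq n, hn⟩, rfl⟩
  rcases frequently_or_distrib.1 hsplit with hT | hrep
  · obtain ⟨φ, hφ, hφT⟩ := extraction_of_frequently_atTop hT
    obtain ⟨ψ, hψ, hlim⟩ := h (seq ∘ φ) hφT
    exact ⟨φ ∘ ψ, hφ.comp hψ, hlim⟩
  · obtain ⟨g, -, hg⟩ := hST.frequently_exists.1 hrep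
    obtain ⟨φ, hφ, hφg⟩ := extraction_of_frequently_atTop hg
    refine ⟨φ, hφ, Or.inl ⟨g, ?_⟩⟩
    simpa only [hφg] using tendstoLocallyUniformlyOn_const atTop g V

lemma fatouSet_eq_of_diff_finite {S T : Set (ℂ → ℂ)} (hTS : T ⊆ S) (hST : (S \ T).Finite) :
    FatouSet S = FatouSet T :=
  Set.ext fun _ =>
    ⟨fun ⟨V, hV, hN⟩ => ⟨V, hV, hN.mono hTS⟩, fun ⟨V, hV, hN⟩ => ⟨V, hV, hN.of_diff_finite hST⟩⟩

theorem stmt_12_general (S T : Set (ℂ → ℂ)) (hT : IsSubsemigroupOf T S)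
    (hRees : (S \ T).Finite) :
    FatouSet S = FatouSet T ∧ JuliaSet S = JuliaSet T := by
  have hF := fatouSet_eq_of_diff_finite hT.2.1 hRees
  exact ⟨hF, congrArg compl hF⟩

theorem stmt_12 (S T : Set (ℂ → ℂ)) (hS : HolomorphicSemigroup S)
    (hfg : FinitelyGeneratedSemigroup S) (hT : IsSubsemigroupOf T S)
    (hRees : (S \ T).Finite) :
    FatouSet S = FatouSet T ∧ JuliaSet S = JuliaSet T :=
  stmt_12_general S T hT hRees
end
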